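/- arXiv:1809.06395 — 3 statements merged into one kernel-verified Lean document; each statement's English description precedes it below -/
import Mathlib

section
/- Let b₁, b₂ > 0, θ₀ ∈ ℝ and β₁, β₂ ∈ ℝ. Suppose (ε_n) and (δ_n) are real sequences with ε_n → 0, δ_n → 0, ε_n > -1 and δ_n > -1 for all n ≥ 1, and suppose that for every n ≥ 1 one has -exp(-2b₁(θ₀ + arctan β₁)) · exp(2nπb₁) · (1 + ε_n) = -exp(-2b₂(θ₀ + arctan β₂)) · exp(2nπb₂) · (1 + δ_n). Then b₁ = b₂ and β₁ = β₂. -/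
/-!
Taking logarithms, the hypothesis says that the affine function
`n ↦ (c₁ - c₂) + 2π(b₁ - b₂) n`, with `cᵢ = -2bᵢ(θ₀ + arctan βᵢ)`, equals
`log (1 + δ n) - log (1 + ε n)` for large `n`, which tends to `0`. An affine sequence with a
finite limit is constant (its increments `2π(b₁ - b₂)` tend to `0`), so `b₁ = b₂` and `c₁ = c₂`;
since `arctan` is injective the latter gives `β₁ = β₂`.
-/

open Real Filter Topology

theorem eq_of_tendsto_affine {a s L : ℝ} (h : Tendsto (fun n : ℕ => a + s * n) atTop (𝓝 L)) :
    s = 0 ∧ a = L := by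
  have hs : Tendsto (fun _ : ℕ => s) atTop (𝓝 0) := by
    convert (h.comp (tendsto_add_atTop_nat 1)).sub h using 1
    · ext n
      simp only [Function.comp_apply, Nat.cast_add, Nat.cast_one]
      ring
    · rw [sub_self]
  obtain rfl : s = 0 := tendsto_const_nhds_iff.mp hs
  exact ⟨rfl, by simpa using h⟩

theorem tendsto_log_one_add {α : Type*} {l : Filter α} {ε : α → ℝ}
    (hε : Tendsto ε l (𝓝 0)) : Tendsto (fun x => log (1 + ε x)) l (𝓝 0) := by
  simpa using (hε.const_add 1).log (by norm_num)

theorem eq_of_exp_mul_exp_mul_one_add_eventuallyEq {c₁ c₂ s₁ s₂ : ℝ} {ε δ : ℕ → ℝ}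
    (hε : Tendsto ε atTop (𝓝 0)) (hδ : Tendsto δ atTop (𝓝 0))
    (h : ∀ᶠ n : ℕ in atTop,
      exp c₁ * exp (s₁ * n) * (1 + ε n) = exp c₂ * exp (s₂ * n) * (1 + δ n)) :
    c₁ = c₂ ∧ s₁ = s₂ := by
  have hpos : ∀ {η : ℕ → ℝ}, Tendsto η atTop (𝓝 0) → ∀ᶠ n in atTop, 0 < 1 + η n := fun hη =>
    (hη.const_add 1).eventually (lt_mem_nhds (by norm_num))
  have hlog : ∀ᶠ n : ℕ in atTop,
      log (1 + δ n) - log (1 + ε n) = (c₁ - c₂) + (s₁ - s₂) * n := by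
    filter_upwards [h, hpos hε, hpos hδ] with n hn hεn hδn
    have := congrArg log hn
    rw [log_mul (by positivity) hεn.ne', log_mul (by positivity) hδn.ne',
      log_mul (by positivity) (by positivity), log_mul (by positivity) (by positivity),
      log_exp, log_exp, log_exp, log_exp] at this
    linarith
  obtain ⟨hs, hc⟩ := eq_of_tendsto_affine
    (((tendsto_log_one_add hδ).sub (tendsto_log_one_add hε)).congr' hlog)
  constructor <;> linarith

theorem equal_eigenvalue_asymptotics_imply_equal_parameters_general
    (b₁ b₂ θ₀ β₁ β₂ : ℝ) (hb₁ : 0 < b₁)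
    (ε δ : ℕ → ℝ)
    (hε : Tendsto ε atTop (nhds 0)) (hδ : Tendsto δ atTop (nhds 0))
    (heq : ∀ n : ℕ, 1 ≤ n →
      -Real.exp (-2 * b₁ * (θ₀ + Real.arctan β₁)) *
        Real.exp (2 * (n : ℝ) * π * b₁) * (1 + ε n)
      = -Real.exp (-2 * b₂ * (θ₀ + Real.arctan β₂)) *
        Real.exp (2 * (n : ℝ) * π * b₂) * (1 + δ n)) :
    b₁ = b₂ ∧ β₁ = β₂ := by
  have heq' : ∀ᶠ n : ℕ in atTop,
      exp (-2 * b₁ * (θ₀ + arctan β₁)) * exp (2 * π * b₁ * n) * (1 + ε n)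
        = exp (-2 * b₂ * (θ₀ + arctan β₂)) * exp (2 * π * b₂ * n) * (1 + δ n) := by
    filter_upwards [eventually_ge_atTop 1] with n hn
    simpa only [neg_mul, neg_inj, mul_right_comm _ (n : ℝ), mul_comm (n : ℝ)] using heq n hn
  obtain ⟨hc, hs⟩ := eq_of_exp_mul_exp_mul_one_add_eventuallyEq hε hδ heq'
  obtain rfl : b₁ = b₂ := by simpa [pi_ne_zero] using hs
  refine ⟨rfl, arctan_injective ?_⟩
  simpa [hb₁.ne'] using hc

theorem equal_eigenvalue_asymptotics_imply_equal_parameters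
    (b₁ b₂ θ₀ β₁ β₂ : ℝ) (hb₁ : 0 < b₁) (hb₂ : 0 < b₂)
    (ε δ : ℕ → ℝ)
    (hε : Tendsto ε atTop (nhds 0)) (hδ : Tendsto δ atTop (nhds 0))
    (hε' : ∀ n : ℕ, 1 ≤ n → -1 < ε n) (hδ' : ∀ n : ℕ, 1 ≤ n → -1 < δ n)
    (heq : ∀ n : ℕ, 1 ≤ n →
      -Real.exp (-2 * b₁ * (θ₀ + Real.arctan β₁)) *
        Real.exp (2 * (n : ℝ) * π * b₁) * (1 + ε n)
      = -Real.exp (-2 * b₂ * (θ₀ + Real.arctan β₂)) *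
        Real.exp (2 * (n : ℝ) * π * b₂) * (1 + δ n)) :
    b₁ = b₂ ∧ β₁ = β₂ :=
  equal_eigenvalue_asymptotics_imply_equal_parameters_general b₁ b₂ θ₀ β₁ β₂ hb₁ ε δ hε hδ heq
end

section
/- Let b > 0, β ∈ ℝ, and define u₀(r) = sin(log(r)/b) and v₀(r) = cos(log(r)/b) for r > 0. Let u₁, u₂ : (0,1) → ℂ be differentiable and suppose that for j = 1, 2: (i) [u_j, u₀ + β·v₀](r) → 0 as r → 0⁺, and (ii) there is M > 0 with |[u_j, v₀](r)| ≤ M for all r ∈ (0, 1/2). Then [u₁, u₂](r) → 0 as r → 0⁺. -/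
/-!
Write `w = u₀ + β v₀`. The bracket `[w, v₀] = -1/b` is a nonzero constant, so the Plücker relation
for the `2 × 2` determinants `[·,·]` gives `[u₁, u₂] = -b ([u₁, w] [u₂, v₀] - [u₁, v₀] [u₂, w])`.
In each product one factor tends to `0` by the boundary condition and the other is bounded.
-/

open Real Filter Topology

/-- The Lagrange bracket `[f,g](r) = f(r)·r·g'(r) − r·f'(r)·g(r)` for complex-valued
functions of a real variable on a subinterval of `(0,∞)`. -/
noncomputable def lagrangeBracketC (f g : ℝ → ℂ) (r : ℝ) : ℂ :=
  f r * ((r : ℂ) * deriv g r) - (r : ℂ) * deriv f r * g r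

theorem lagrangeBracketC_mul_lagrangeBracketC (f g h k : ℝ → ℂ) (r : ℝ) :
    lagrangeBracketC f g r * lagrangeBracketC h k r =
      lagrangeBracketC f h r * lagrangeBracketC g k r -
        lagrangeBracketC f k r * lagrangeBracketC g h r := by
  simp only [lagrangeBracketC]
  ring

theorem lagrangeBracketC_sin_add_cos_log_div (b β : ℝ) {r : ℝ} (hr : r ≠ 0) :
    lagrangeBracketC
        (fun t => ((Real.sin (Real.log t / b) + β * Real.cos (Real.log t / b) : ℝ) : ℂ))
        (fun t => (Real.cos (Real.log t / b) : ℂ)) r = -(b : ℂ)⁻¹ := by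
  have hlog : HasDerivAt (fun t => Real.log t / b) (r⁻¹ / b) r :=
    (Real.hasDerivAt_log hr).div_const b
  have hsin := (Real.hasDerivAt_sin _).comp r hlog
  have hcos := (Real.hasDerivAt_cos _).comp r hlog
  have hw : HasDerivAt
      (fun t => ((Real.sin (Real.log t / b) + β * Real.cos (Real.log t / b) : ℝ) : ℂ))
      (((Real.cos (Real.log r / b) - β * Real.sin (Real.log r / b)) * (r⁻¹ / b) : ℝ) : ℂ) r :=
    (hsin.add (hcos.const_mul β)).ofReal_comp.congr_deriv (congrArg Complex.ofReal (by ring))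
  have hv : HasDerivAt (fun t => (Real.cos (Real.log t / b) : ℂ))
      ((-Real.sin (Real.log r / b) * (r⁻¹ / b) : ℝ) : ℂ) r :=
    hcos.ofReal_comp
  have hpair : Real.sin (Real.log r / b) ^ 2 + Real.cos (Real.log r / b) ^ 2 = 1 :=
    Real.sin_sq_add_cos_sq _
  have hrC : (r : ℂ) ≠ 0 := Complex.ofReal_ne_zero.mpr hr
  rw [lagrangeBracketC, hw.deriv, hv.deriv]
  generalize Real.sin (Real.log r / b) = s at hpair ⊢
  generalize Real.cos (Real.log r / b) = c at hpair ⊢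
  have hpairC : (s : ℂ) ^ 2 + (c : ℂ) ^ 2 = 1 := by exact_mod_cast hpair
  push_cast
  field_simp
  linear_combination -(b : ℂ)⁻¹ * hpairC

theorem isBoundedUnder_norm_nhdsGT_of_forall_Ioo {E : Type*} [Norm E] {f : ℝ → E}
    {x a M : ℝ} (hxa : x < a) (hf : ∀ r ∈ Set.Ioo x a, ‖f r‖ ≤ M) :
    IsBoundedUnder (· ≤ ·) (𝓝[>] x) (norm ∘ f) :=
  isBoundedUnder_of_eventually_le (a := M) (eventually_of_mem (Ioo_mem_nhdsGT hxa) hf)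

theorem bracket_vanishes_for_common_selfadjoint_bc_general (b β : ℝ) (hb : 0 < b)
    (u₁ u₂ : ℝ → ℂ)
    (hbc₁ : Tendsto
      (fun r => lagrangeBracketC u₁
        (fun t => ((Real.sin (Real.log t / b) + β * Real.cos (Real.log t / b) : ℝ) : ℂ)) r)
      (nhdsWithin 0 (Set.Ioi 0)) (nhds 0))
    (hbc₂ : Tendsto
      (fun r => lagrangeBracketC u₂
        (fun t => ((Real.sin (Real.log t / b) + β * Real.cos (Real.log t / b) : ℝ) : ℂ)) r)
      (nhdsWithin 0 (Set.Ioi 0)) (nhds 0))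
    (M : ℝ)
    (hbd₁ : ∀ r ∈ Set.Ioo (0 : ℝ) (1 / 2),
      ‖lagrangeBracketC u₁ (fun t => (Real.cos (Real.log t / b) : ℂ)) r‖ ≤ M)
    (hbd₂ : ∀ r ∈ Set.Ioo (0 : ℝ) (1 / 2),
      ‖lagrangeBracketC u₂ (fun t => (Real.cos (Real.log t / b) : ℂ)) r‖ ≤ M) :
    Tendsto (fun r => lagrangeBracketC u₁ u₂ r) (nhdsWithin 0 (Set.Ioi 0)) (nhds 0) := by
  set w : ℝ → ℂ :=
    fun t => ((Real.sin (Real.log t / b) + β * Real.cos (Real.log t / b) : ℝ) : ℂ)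
  set v : ℝ → ℂ := fun t => (Real.cos (Real.log t / b) : ℂ)
  have hbdd₁ := isBoundedUnder_norm_nhdsGT_of_forall_Ioo (by norm_num) hbd₁
  have hbdd₂ := isBoundedUnder_norm_nhdsGT_of_forall_Ioo (by norm_num) hbd₂
  have hlim : Tendsto (fun r => -(b : ℂ) *
      (lagrangeBracketC u₁ w r * lagrangeBracketC u₂ v r -
        lagrangeBracketC u₁ v r * lagrangeBracketC u₂ w r)) (𝓝[>] 0) (𝓝 0) := by
    simpa using ((hbc₁.zero_mul_isBoundedUnder_le hbdd₂).sub
      (isBoundedUnder_le_mul_tendsto_zero hbdd₁ hbc₂)).const_mul (-(b : ℂ))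
  refine hlim.congr' (eventually_nhdsWithin_of_forall fun r hr => ?_)
  have hbC : (b : ℂ) ≠ 0 := Complex.ofReal_ne_zero.mpr hb.ne'
  rw [← lagrangeBracketC_mul_lagrangeBracketC,
    lagrangeBracketC_sin_add_cos_log_div b β (Set.mem_Ioi.mp hr).ne']
  field_simp

theorem bracket_vanishes_for_common_selfadjoint_bc (b β : ℝ) (hb : 0 < b)
    (u₁ u₂ : ℝ → ℂ)
    (hu₁ : ∀ r ∈ Set.Ioo (0 : ℝ) 1, DifferentiableAt ℝ u₁ r)
    (hu₂ : ∀ r ∈ Set.Ioo (0 : ℝ) 1, DifferentiableAt ℝ u₂ r)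
    (hbc₁ : Tendsto
      (fun r => lagrangeBracketC u₁
        (fun t => ((Real.sin (Real.log t / b) + β * Real.cos (Real.log t / b) : ℝ) : ℂ)) r)
      (nhdsWithin 0 (Set.Ioi 0)) (nhds 0))
    (hbc₂ : Tendsto
      (fun r => lagrangeBracketC u₂
        (fun t => ((Real.sin (Real.log t / b) + β * Real.cos (Real.log t / b) : ℝ) : ℂ)) r)
      (nhdsWithin 0 (Set.Ioi 0)) (nhds 0))
    (M : ℝ) (hM : 0 < M)
    (hbd₁ : ∀ r ∈ Set.Ioo (0 : ℝ) (1 / 2),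
      ‖lagrangeBracketC u₁ (fun t => (Real.cos (Real.log t / b) : ℂ)) r‖ ≤ M)
    (hbd₂ : ∀ r ∈ Set.Ioo (0 : ℝ) (1 / 2),
      ‖lagrangeBracketC u₂ (fun t => (Real.cos (Real.log t / b) : ℂ)) r‖ ≤ M) :
    Tendsto (fun r => lagrangeBracketC u₁ u₂ r) (nhdsWithin 0 (Set.Ioi 0)) (nhds 0) :=
  bracket_vanishes_for_common_selfadjoint_bc_general b β hb u₁ u₂ hbc₁ hbc₂ M hbd₁ hbd₂
end

section
/- Let b > 0 and μ ∈ ℝ. There exists a twice continuously differentiable function Θ : ℝ → ℝ, not identically zero on [-π/2, π/2], satisfying Θ''(θ) = -μ·Θ(θ) for all θ ∈ ℝ together with b·Θ'(π/2) + Θ(π/2) = 0 and b·Θ'(-π/2) + Θ(-π/2) = 0, if and only if μ = -1/b² or μ = n² for some integer n ≥ 1. -/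
/-!
Write `y'' = -μ y` as the system `y' = z`, `z' = -μ y`, and let `s` be the solution with
`s 0 = 0`, `s' 0 = 1`, `c = s'`. The Wronskian of two solutions is constant, so every solution is
`y t = y a * c (t - a) + z a * s (t - a)`. The left boundary condition fixes the data at `a = -π/2`
up to scale, `(y a, z a) ∝ (-b, 1)`, and the right one then reads `(1 + b² μ) s π = 0`.
Finally `s π` is `sin (√μ π) / √μ`, `π` or `sinh (√-μ π) / √-μ` according to the sign of `μ`,
and vanishes exactly when `μ` is the square of a positive integer.
-/

open Real Set

/-- `y` solves `y'' = -μ y`, with `z` playing the role of `y'`. -/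
def IsOscillatorSolution (μ : ℝ) (y z : ℝ → ℝ) : Prop :=
  ∀ t, HasDerivAt y (z t) t ∧ HasDerivAt z (-μ * y t) t

namespace IsOscillatorSolution

variable {μ : ℝ} {y z u v : ℝ → ℝ}

theorem derivative (h : IsOscillatorSolution μ y z) :
    IsOscillatorSolution μ z (fun t => -μ * y t) :=
  fun t => ⟨(h t).2, by simpa [mul_assoc] using ((h t).1.const_mul (-μ))⟩

theorem comp_sub_const (h : IsOscillatorSolution μ y z) (a : ℝ) :
    IsOscillatorSolution μ (fun t => y (t - a)) (fun t => z (t - a)) :=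
  fun t => ⟨(h (t - a)).1.comp_sub_const t a, (h (t - a)).2.comp_sub_const t a⟩

theorem sub (hy : IsOscillatorSolution μ y z) (hu : IsOscillatorSolution μ u v) :
    IsOscillatorSolution μ (fun t => y t - u t) (fun t => z t - v t) :=
  fun t => ⟨(hy t).1.sub (hu t).1, ((hy t).2.sub (hu t).2).congr_deriv (by ring)⟩

theorem const_mul (h : IsOscillatorSolution μ y z) (k : ℝ) :
    IsOscillatorSolution μ (fun t => k * y t) (fun t => k * z t) :=
  fun t => ⟨(h t).1.const_mul k, ((h t).2.const_mul k).congr_deriv (by ring)⟩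

theorem wronskian_eq (hy : IsOscillatorSolution μ y z) (hu : IsOscillatorSolution μ u v)
    (t a : ℝ) : y t * v t - z t * u t = y a * v a - z a * u a := by
  have hW : ∀ x, HasDerivAt (fun x => y x * v x - z x * u x) 0 x := fun x =>
    (((hy x).1.mul (hu x).2).sub ((hy x).2.mul (hu x).1)).congr_deriv (by ring)
  exact is_const_of_deriv_eq_zero (fun x => (hW x).differentiableAt) (fun x => (hW x).deriv) t a

theorem eq_of_sine (hy : IsOscillatorSolution μ y z) {s c : ℝ → ℝ}
    (hs : IsOscillatorSolution μ s c) (hs0 : s 0 = 0) (hc0 : c 0 = 1) (a t : ℝ) :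
    y t = y a * c (t - a) + z a * s (t - a) ∧
      z t = z a * c (t - a) - μ * y a * s (t - a) := by
  have hs' := hs.comp_sub_const a
  have hc' := hs'.derivative
  have h₁ := hy.wronskian_eq hs' t a
  have h₂ := hy.wronskian_eq hc' t a
  have h₃ := hs.wronskian_eq hs.derivative (t - a) 0
  simp only [sub_self, hs0, hc0] at h₁ h₂ h₃
  constructor
  · linear_combination c (t - a) * h₁ - s (t - a) * h₂ + y t * h₃
  · linear_combination -μ * s (t - a) * h₁ - c (t - a) * h₂ + z t * h₃

theorem deriv_eq (h : IsOscillatorSolution μ y z) : deriv y = z :=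
  funext fun t => (h t).1.deriv

theorem contDiff (h : IsOscillatorSolution μ y z) : ContDiff ℝ 2 y := by
  have hyc : Continuous y := continuous_iff_continuousAt.2 fun t => (h t).1.continuousAt
  rw [show (2 : WithTop ℕ∞) = 1 + 1 from rfl, contDiff_succ_iff_deriv, h.deriv_eq,
    contDiff_one_iff_deriv, h.derivative.deriv_eq]
  exact ⟨fun t => (h t).1.differentiableAt, by simp, fun t => (h t).2.differentiableAt,
    continuous_const.mul hyc⟩

theorem of_contDiff (hy : ContDiff ℝ 2 y)
    (hode : ∀ t, deriv (deriv y) t = -μ * y t) : IsOscillatorSolution μ y (deriv y) := by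
  have hy' : ContDiff ℝ 1 (deriv y) :=
    (contDiff_succ_iff_deriv.mp (show ContDiff ℝ (1 + 1) y from hy)).2.2
  intro t
  exact ⟨(hy.differentiable two_ne_zero t).hasDerivAt,
    hode t ▸ (hy'.differentiable one_ne_zero t).hasDerivAt⟩

end IsOscillatorSolution

theorem isOscillatorSolution_sin {ω : ℝ} (hω : ω ≠ 0) :
    IsOscillatorSolution (ω ^ 2) (fun t => sin (ω * t) / ω) (fun t => cos (ω * t)) := by
  intro t
  have hωt : HasDerivAt (fun t => ω * t) ω t := by simpa using (hasDerivAt_id t).const_mul ω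
  exact ⟨(hωt.sin.div_const ω).congr_deriv (by field_simp),
    hωt.cos.congr_deriv (by field_simp)⟩

theorem isOscillatorSolution_sinh {ω : ℝ} (hω : ω ≠ 0) :
    IsOscillatorSolution (-ω ^ 2) (fun t => sinh (ω * t) / ω) (fun t => cosh (ω * t)) := by
  intro t
  have hωt : HasDerivAt (fun t => ω * t) ω t := by simpa using (hasDerivAt_id t).const_mul ω
  exact ⟨(hωt.sinh.div_const ω).congr_deriv (by field_simp),
    hωt.cosh.congr_deriv (by field_simp)⟩

theorem isOscillatorSolution_id : IsOscillatorSolution 0 id (fun _ => 1) :=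
  fun t => ⟨hasDerivAt_id t, by simpa using hasDerivAt_const t (1 : ℝ)⟩

theorem sin_mul_pi_eq_zero_iff {ω : ℝ} (hω : 0 < ω) :
    sin (ω * π) = 0 ↔ ∃ n : ℕ, 1 ≤ n ∧ ω ^ 2 = (n : ℝ) ^ 2 := by
  constructor
  · intro h
    obtain ⟨k, hk⟩ := sin_eq_zero_iff.mp h
    have hkω : (k : ℝ) = ω := mul_right_cancel₀ pi_ne_zero hk
    have hk0 : 0 < k := by exact_mod_cast hkω ▸ hω
    refine ⟨k.toNat, by omega, ?_⟩
    rw [← hkω, ← Int.cast_natCast, Int.toNat_of_nonneg hk0.le]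
  · rintro ⟨n, -, hn⟩
    rw [← abs_of_pos hω, ← sqrt_sq_eq_abs, hn, sqrt_sq n.cast_nonneg]
    exact sin_nat_mul_pi n

theorem exists_sine_solution (μ : ℝ) :
    ∃ s c : ℝ → ℝ, IsOscillatorSolution μ s c ∧ s 0 = 0 ∧ c 0 = 1 ∧
      (s π = 0 ↔ ∃ n : ℕ, 1 ≤ n ∧ μ = (n : ℝ) ^ 2) := by
  rcases lt_trichotomy μ 0 with hμ | rfl | hμ
  · obtain ⟨ω, hω, rfl⟩ : ∃ ω : ℝ, 0 < ω ∧ μ = -ω ^ 2 :=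
      ⟨√(-μ), sqrt_pos.mpr (neg_pos.mpr hμ), by rw [sq_sqrt (by linarith)]; ring⟩
    refine ⟨_, _, isOscillatorSolution_sinh hω.ne', by simp, by simp, ?_⟩
    have hsinh : 0 < sinh (ω * π) / ω := div_pos (sinh_pos_iff.mpr (by positivity)) hω
    refine iff_of_false hsinh.ne' ?_
    rintro ⟨n, -, hn⟩
    nlinarith [sq_nonneg (n : ℝ)]
  · refine ⟨_, _, isOscillatorSolution_id, rfl, rfl, iff_of_false pi_ne_zero ?_⟩
    rintro ⟨n, hn, h⟩
    have : (1 : ℝ) ≤ n := by exact_mod_cast hn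
    nlinarith
  · obtain ⟨ω, hω, rfl⟩ : ∃ ω : ℝ, 0 < ω ∧ μ = ω ^ 2 :=
      ⟨√μ, sqrt_pos.mpr hμ, (sq_sqrt hμ.le).symm⟩
    refine ⟨_, _, isOscillatorSolution_sin hω.ne', by simp, by simp, ?_⟩
    rw [div_eq_zero_iff, or_iff_left hω.ne', sin_mul_pi_eq_zero_iff hω]

theorem exists_robin_eigenfunction_iff {μ b a a' : ℝ} (hb : b ≠ 0) (haa' : a ≤ a')
    {s c : ℝ → ℝ} (hs : IsOscillatorSolution μ s c) (hs0 : s 0 = 0) (hc0 : c 0 = 1) :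
    (∃ y z, IsOscillatorSolution μ y z ∧ ¬(∀ t ∈ Icc a a', y t = 0) ∧
        b * z a' + y a' = 0 ∧ b * z a + y a = 0) ↔
      (1 + b ^ 2 * μ) * s (a' - a) = 0 := by
  constructor
  · rintro ⟨y, z, hy, hne, hbc', hbc⟩
    obtain ⟨hya', hza'⟩ := hy.eq_of_sine hs hs0 hc0 a a'
    have hza : z a ≠ 0 := by
      refine fun hza => hne fun t _ => ?_
      rw [(hy.eq_of_sine hs hs0 hc0 a t).1, hza, show y a = 0 by simpa [hza] using hbc]
      ring
    refine (mul_eq_zero.mp ?_).resolve_left hza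
    linear_combination hbc' - b * hza' - hya' - (c (a' - a) - b * μ * s (a' - a)) * hbc
  · intro hchar
    have hsc := hs.comp_sub_const a
    refine ⟨_, _, hsc.sub (hsc.derivative.const_mul b), fun h => ?_, ?_, ?_⟩
    · have := h a ⟨le_rfl, haa'⟩
      simp only [sub_self, hs0, hc0] at this
      exact hb (by linarith)
    · linear_combination hchar
    · simp only [sub_self, hs0, hc0]
      ring

theorem angular_eigenvalue_characterization (b : ℝ) (hb : 0 < b) (μ : ℝ) :
    (∃ Θ : ℝ → ℝ, ContDiff ℝ 2 Θ
        ∧ ¬(∀ θ ∈ Set.Icc (-(π / 2)) (π / 2), Θ θ = 0)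
        ∧ (∀ θ : ℝ, deriv (deriv Θ) θ = -μ * Θ θ)
        ∧ b * deriv Θ (π / 2) + Θ (π / 2) = 0
        ∧ b * deriv Θ (-(π / 2)) + Θ (-(π / 2)) = 0)
    ↔ μ = -1 / b ^ 2 ∨ ∃ n : ℕ, 1 ≤ n ∧ μ = (n : ℝ) ^ 2 := by
  obtain ⟨s, c, hs, hs0, hc0, hsπ⟩ := exists_sine_solution μ
  have hroot : 1 + b ^ 2 * μ = 0 ↔ μ = -1 / b ^ 2 := by
    rw [eq_div_iff (by positivity)]
    constructor <;> intro h <;> linarith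
  have hchar := exists_robin_eigenfunction_iff (a := -(π / 2)) (a' := π / 2) hb.ne'
    (by linarith [pi_pos]) hs hs0 hc0
  rw [show π / 2 - -(π / 2) = π by ring, mul_eq_zero, hroot, hsπ] at hchar
  rw [← hchar]
  constructor
  · rintro ⟨Θ, hΘ, hne, hode, hbc', hbc⟩
    exact ⟨Θ, deriv Θ, .of_contDiff hΘ hode, hne, hbc', hbc⟩
  · rintro ⟨y, z, hy, hne, hbc', hbc⟩
    refine ⟨y, hy.contDiff, hne, fun t => ?_, hy.deriv_eq ▸ hbc', hy.deriv_eq ▸ hbc⟩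
    rw [hy.deriv_eq, hy.derivative.deriv_eq]
end
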